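/- Let C be an orientation of a cycle of even length with ‖C‖ edges. If γ_C = 1, then there exists a tournamenton W such that t(C,W) > 2^{-‖C‖}; and if γ_C = -1, then there exists a tournamenton W such that t(C,W) < 2^{-‖C‖}. -/

import Mathlib

open MeasureTheory
open scoped Classical

/-- An oriented graph on a finite vertex type `V`: at most one of `(v,w)`, `(w,v)` is an edge. -/
structure OrientedGraph (V : Type) [Fintype V] where
  edges : Finset (V × V)
  irrefl : ∀ e ∈ edges, e.1 ≠ e.2
  antisymm : ∀ v w : V, (v, w) ∈ edges → (w, v) ∉ edges

/-- The homomorphism density `t(H,U)` of an oriented graph `H` in a kernel `U`. -/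
noncomputable def homDensity {V : Type} [Fintype V] (H : OrientedGraph V)
    (U : ℝ → ℝ → ℝ) : ℝ :=
  ∫ x in Set.univ.pi (fun _ : V => Set.Icc (0 : ℝ) 1),
    ∏ e ∈ H.edges, U (x e.1) (x e.2)

/-- A kernel (bounded measurable) which is antisymmetric on `[0,1]²`. -/
def IsAntisymmetricKernel (U : ℝ → ℝ → ℝ) : Prop :=
  Measurable (Function.uncurry U) ∧
  (∃ M : ℝ, ∀ x ∈ Set.Icc (0 : ℝ) 1, ∀ y ∈ Set.Icc (0 : ℝ) 1, |U x y| ≤ M) ∧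
  (∀ x ∈ Set.Icc (0 : ℝ) 1, ∀ y ∈ Set.Icc (0 : ℝ) 1, U x y = - U y x)

/-- A kernel with values in `[-1/2, 1/2]` on the unit square. -/
def BoundedByHalf (U : ℝ → ℝ → ℝ) : Prop :=
  ∀ x ∈ Set.Icc (0 : ℝ) 1, ∀ y ∈ Set.Icc (0 : ℝ) 1, |U x y| ≤ 1 / 2

/-- A tournamenton. -/
def IsTournamenton (W : ℝ → ℝ → ℝ) : Prop :=
  Measurable (Function.uncurry W) ∧
  (∀ x ∈ Set.Icc (0 : ℝ) 1, ∀ y ∈ Set.Icc (0 : ℝ) 1, 0 ≤ W x y ∧ W x y ≤ 1) ∧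
  (∀ x ∈ Set.Icc (0 : ℝ) 1, ∀ y ∈ Set.Icc (0 : ℝ) 1, W x y + W y x = 1)

/-- Lebesgue measure restricted to the unit square. -/
noncomputable def squareMeasure : Measure (ℝ × ℝ) :=
  MeasureTheory.volume.restrict ((Set.Icc (0 : ℝ) 1) ×ˢ (Set.Icc (0 : ℝ) 1))

/-- An oriented graph `H` is quasirandom-forcing if every tournamenton `W` with
`t(H,W) = 2^{-‖H‖}` equals `1/2` almost everywhere. -/
def QuasirandomForcing {V : Type} [Fintype V] (H : OrientedGraph V) : Prop :=
  ∀ W : ℝ → ℝ → ℝ, IsTournamenton W →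
    homDensity H W = (1 / 2 : ℝ) ^ H.edges.card →
    ∀ᵐ p : ℝ × ℝ ∂squareMeasure, W p.1 p.2 = 1 / 2

/-- `H` is an orientation of the path `0 - 1 - ⋯ - m` (with `m` edges). -/
def IsPathOrientation {m : ℕ} (H : OrientedGraph (Fin (m + 1))) : Prop :=
  (∀ e ∈ H.edges, e.2.val = e.1.val + 1 ∨ e.1.val = e.2.val + 1) ∧
  (∀ i : ℕ, i < m → ∃ e ∈ H.edges,
    (e.1.val = i ∧ e.2.val = i + 1) ∨ (e.2.val = i ∧ e.1.val = i + 1))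

/-- `C` is an orientation of the cycle `0 - 1 - ⋯ - (ℓ-1) - 0` of length `ℓ`. -/
def IsCycleOrientation {ℓ : ℕ} (C : OrientedGraph (Fin ℓ)) : Prop :=
  (∀ e ∈ C.edges, e.2.val = (e.1.val + 1) % ℓ ∨ e.1.val = (e.2.val + 1) % ℓ) ∧
  (∀ i : Fin ℓ, ∃ e ∈ C.edges,
    (e.1 = i ∧ e.2.val = (i.val + 1) % ℓ) ∨ (e.2 = i ∧ e.1.val = (i.val + 1) % ℓ))

/-- `Q_{2k}`: the orientation of the path with `2k` edges in which all edges are oriented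
away from the central vertex `k`; edges are `i+1 → i` for `i < k` and `i → i+1` for `k ≤ i`. -/
noncomputable def pathQ (k : ℕ) : OrientedGraph (Fin (2 * k + 1)) where
  edges := Finset.univ.filter fun e : Fin (2 * k + 1) × Fin (2 * k + 1) =>
    (e.2.val < k ∧ e.1.val = e.2.val + 1) ∨ (k ≤ e.1.val ∧ e.2.val = e.1.val + 1)
  irrefl := by
    intro e he heq
    simp only [Finset.mem_filter, Finset.mem_univ, true_and] at he
    have h : e.1.val = e.2.val := congrArg Fin.val heq
    omega
  antisymm := by
    intro v w hvw hwv
    simp only [Finset.mem_filter, Finset.mem_univ, true_and] at hvw hwv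
    omega

/-- `D_ℓ` (for even `ℓ = 2k`): the orientation of the cycle of length `ℓ` with all edges
oriented from vertex `0` towards vertex `k = ℓ/2`. -/
noncomputable def cycD (ℓ : ℕ) : OrientedGraph (Fin ℓ) where
  edges := Finset.univ.filter fun e : Fin ℓ × Fin ℓ =>
    (e.1.val < ℓ / 2 ∧ e.2.val = e.1.val + 1) ∨
    (ℓ / 2 ≤ e.2.val ∧ e.1.val = e.2.val + 1) ∨
    (2 ≤ ℓ ∧ e.1.val = 0 ∧ e.2.val = ℓ - 1)
  irrefl := by
    intro e he heq
    simp only [Finset.mem_filter, Finset.mem_univ, true_and] at he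
    have h : e.1.val = e.2.val := congrArg Fin.val heq
    have h1 := e.1.isLt
    omega
  antisymm := by
    intro v w hvw hwv
    simp only [Finset.mem_filter, Finset.mem_univ, true_and] at hvw hwv
    have h1 := v.isLt
    have h2 := w.isLt
    omega

/-- The disjoint union `Q_{2 n 0} ∪ ⋯ ∪ Q_{2 n (k-1)}`. -/
noncomputable def QUnion (k : ℕ) (n : Fin k → ℕ) :
    OrientedGraph ((i : Fin k) × Fin (2 * n i + 1)) where
  edges := Finset.univ.filter fun e =>
    e.1.1 = e.2.1 ∧
      ((e.2.2.val < n e.1.1 ∧ e.1.2.val = e.2.2.val + 1) ∨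
       (n e.1.1 ≤ e.1.2.val ∧ e.2.2.val = e.1.2.val + 1))
  irrefl := by
    intro e he heq
    simp only [Finset.mem_filter, Finset.mem_univ, true_and] at he
    have h : e.1.2.val = e.2.2.val := by rw [heq]
    omega
  antisymm := by
    intro v w hvw hwv
    simp only [Finset.mem_filter, Finset.mem_univ, true_and] at hvw hwv
    have h : n v.1 = n w.1 := by rw [hvw.1]
    omega

/-- `F` (a set of edges on the vertex set `W`) can be obtained from the oriented graph `H`
by reversing a set `R` of edges of `H` whose cardinality satisfies `r`, and possibly adding
isolated vertices (the injection `φ` embeds the vertices of `H`). -/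
def ObtainedBy {V W : Type} [Fintype V] [DecidableEq V] [Fintype W] [DecidableEq W]
    (H : OrientedGraph V) (F : Finset (W × W)) (r : ℕ → Prop) : Prop :=
  ∃ φ : V → W, Function.Injective φ ∧
    ∃ R : Finset (V × V), R ⊆ H.edges ∧ r R.card ∧
      F = (H.edges \ R).image (fun e => (φ e.1, φ e.2)) ∪
          R.image (fun e => (φ e.2, φ e.1))

/-- The coefficient `α_C(2 n 0, …, 2 n (k-1))`: the number of edge subsets `F ⊆ E(C)` such
that the spanning subgraph `C⟨F⟩` is obtained from `Q_{2 n 0} ∪ ⋯ ∪ Q_{2 n (k-1)}` by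
reversing an even number of edges and adding isolated vertices, minus the number of those
obtained by reversing an odd number of edges. -/
noncomputable def alphaCoeff {ℓ : ℕ} (C : OrientedGraph (Fin ℓ)) {k : ℕ}
    (n : Fin k → ℕ) : ℤ :=
  ((C.edges.powerset.filter fun F => ObtainedBy (QUnion k n) F Even).card : ℤ) -
  ((C.edges.powerset.filter fun F => ObtainedBy (QUnion k n) F Odd).card : ℤ)

/-- `γ_C`: equal to `1` if `C` can be obtained from `D_ℓ` by reversing an even number of
edges, and `-1` otherwise. -/
noncomputable def gammaCoeff {ℓ : ℕ} (C : OrientedGraph (Fin ℓ)) : ℤ :=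
  if ObtainedBy (cycD ℓ) C.edges Even then 1 else -1

/-!
Take `W = 1/2 + U` with `U x y = (1/2) sin 2π(y - x)`. The kernel `a + b sin 2π(y - x)` only has
the Fourier modes `-1, 0, 1`, and integrating a product of such kernels around a cycle keeps
only the index sequences that are constant along the cycle; hence
`t(C, a + b sin) = a^ℓ + 2 (-1)^(ℓ/2) σ_C (b/2)^ℓ`, where `σ_C = ±1` records the edge directions.
In particular `t(C, W) = 2^{-ℓ} + t(C, U)`.

Since `U` is antisymmetric, relabelling the vertices does not change `t(·, U)` while reversing an
edge changes its sign. Every orientation `C` of the cycle arises from `D_ℓ` by reversing some edges,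
so `t(C, U) = γ_C t(D_ℓ, U)`, and `t(D_ℓ, U) = 2 (1/4)^ℓ > 0`.
-/

open Real Complex Finset MeasureTheory

theorem prod_obtainedBy_edges {V W : Type} {M : Type*} [Fintype V] [DecidableEq V]
    [DecidableEq W] [CommMonoid M] (H : OrientedGraph V) {φ : V → W}
    (hφ : Function.Injective φ) {R : Finset (V × V)} (hR : R ⊆ H.edges) (f : W × W → M) :
    ∏ e ∈ (H.edges \ R).image (fun e => (φ e.1, φ e.2)) ∪ R.image (fun e => (φ e.2, φ e.1)), f e
      = (∏ e ∈ H.edges \ R, f (φ e.1, φ e.2)) * ∏ e ∈ R, f (φ e.2, φ e.1) := by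
  have hdisj : Disjoint ((H.edges \ R).image (fun e => (φ e.1, φ e.2)))
      (R.image (fun e => (φ e.2, φ e.1))) := by
    rw [disjoint_left]
    rintro _ hu hw
    obtain ⟨⟨u, v⟩, huv, rfl⟩ := mem_image.1 hu
    obtain ⟨⟨w, z⟩, hwz, hE⟩ := mem_image.1 hw
    simp only [Prod.mk.injEq] at hE
    rw [hφ hE.1, hφ hE.2] at hwz
    exact H.antisymm u v (mem_sdiff.1 huv).1 (hR hwz)
  have hinj : Function.Injective fun e : V × V => (φ e.1, φ e.2) := hφ.prodMap hφ
  have hinj' : Function.Injective fun e : V × V => (φ e.2, φ e.1) :=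
    fun u v h => hinj (Prod.swap_injective h)
  rw [prod_union hdisj, prod_image hinj.injOn, prod_image hinj'.injOn]

theorem obtainedBy_of_forall_mem_or_swap_mem {V : Type} [Fintype V] [DecidableEq V]
    {G G' : OrientedGraph V} (h : ∀ e ∈ G'.edges, e ∈ G.edges ∨ e.swap ∈ G.edges)
    (h' : ∀ e ∈ G.edges, e ∈ G'.edges ∨ e.swap ∈ G'.edges) {r : ℕ → Prop}
    (hr : r (G.edges \ G'.edges).card) : ObtainedBy G G'.edges r := by
  refine ⟨id, Function.injective_id, G.edges \ G'.edges, sdiff_subset, hr, ?_⟩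
  ext ⟨v, w⟩
  simp only [id, sdiff_sdiff_right_self, Finset.inf_eq_inter, image_id', mem_union, mem_inter,
    mem_image, mem_sdiff, Prod.exists, Prod.mk.injEq]
  constructor
  · intro hvw
    by_cases hG : (v, w) ∈ G.edges
    · exact Or.inl ⟨hG, hvw⟩
    · exact Or.inr ⟨w, v, ⟨(h _ hvw).resolve_left hG, G'.antisymm v w hvw⟩, rfl, rfl⟩
  · rintro (⟨-, hvw⟩ | ⟨a, b, ⟨hab, hab'⟩, rfl, rfl⟩)
    exacts [hvw, (h' _ hab).resolve_left hab']

theorem setIntegral_univ_pi_comp_equiv {V : Type} [Fintype V] (σ : V ≃ V) (s : Set ℝ)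
    (F : (V → ℝ) → ℝ) :
    ∫ x in Set.univ.pi (fun _ => s), F (x ∘ σ) = ∫ x in Set.univ.pi (fun _ => s), F x := by
  simp_rw [volume_pi, Measure.restrict_pi_pi]
  have hσ := measurePreserving_piCongrLeft (fun _ : V => volume.restrict s) σ.symm
  conv_rhs => rw [← hσ.integral_comp']
  congr 1 with x
  congr 1 with v
  simp [MeasurableEquiv.coe_piCongrLeft, Equiv.piCongrLeft_apply_eq_cast]

theorem homDensity_eq_neg_one_pow_mul_of_obtainedBy {V : Type} [Fintype V] [DecidableEq V]
    {H G : OrientedGraph V} {r : ℕ → Prop} {U : ℝ → ℝ → ℝ}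
    (hU : ∀ x ∈ Set.Icc (0 : ℝ) 1, ∀ y ∈ Set.Icc (0 : ℝ) 1, U x y = -U y x)
    (h : ObtainedBy H G.edges r) :
    ∃ m, r m ∧ homDensity G U = (-1) ^ m * homDensity H U := by
  obtain ⟨φ, hφ, R, hRH, hr, hG⟩ := h
  refine ⟨R.card, hr, ?_⟩
  have hpt : ∀ x ∈ Set.univ.pi (fun _ : V => Set.Icc (0 : ℝ) 1),
      ∏ e ∈ G.edges, U (x e.1) (x e.2) =
        (-1) ^ R.card * ∏ e ∈ H.edges, U ((x ∘ φ) e.1) ((x ∘ φ) e.2) := by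
    intro x hx
    rw [Set.mem_univ_pi] at hx
    have hrev : ∏ e ∈ R, U (x (φ e.2)) (x (φ e.1)) =
        (-1) ^ R.card * ∏ e ∈ R, U (x (φ e.1)) (x (φ e.2)) := by
      rw [← prod_neg]
      exact prod_congr rfl fun e _ => hU _ (hx (φ e.2)) _ (hx (φ e.1))
    rw [hG, prod_obtainedBy_edges H hφ hRH (fun e => U (x e.1) (x e.2)), hrev,
      ← prod_sdiff hRH]
    simp only [Function.comp_apply]
    ring
  rw [homDensity, setIntegral_congr_fun (MeasurableSet.univ_pi fun _ => measurableSet_Icc) hpt,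
    integral_const_mul, homDensity]
  exact congrArg _ (setIntegral_univ_pi_comp_equiv
    (Equiv.ofBijective φ (Finite.injective_iff_bijective.1 hφ)) _
    (fun y => ∏ e ∈ H.edges, U (y e.1) (y e.2)))

lemma Nat.add_one_mod_eq_ite {x ℓ : ℕ} (h : x < ℓ) :
    (x + 1) % ℓ = if x + 1 = ℓ then 0 else x + 1 := by
  split_ifs with hx
  · rw [hx, Nat.mod_self]
  · exact Nat.mod_eq_of_lt (by omega)

section CycleOrientation

variable {ℓ : ℕ} [NeZero ℓ]

lemma Fin.val_add_one_eq_mod (i : Fin ℓ) : ((i + 1 : Fin ℓ) : ℕ) = ((i : ℕ) + 1) % ℓ := by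
  rw [Fin.val_add, Fin.val_one', Nat.add_mod_mod]

lemma Fin.add_one_add_one_ne_self (hℓ : 3 ≤ ℓ) (i : Fin ℓ) : i + 1 + 1 ≠ i := by
  rw [add_assoc, Ne, add_eq_left, Fin.ext_iff, Fin.val_add, Fin.val_one',
    Nat.mod_eq_of_lt (by omega : 1 < ℓ)]
  simp [Nat.mod_eq_of_lt (by omega : 2 < ℓ)]

namespace IsCycleOrientation

variable {C C' : OrientedGraph (Fin ℓ)}

lemma adj_of_mem (hC : IsCycleOrientation C) {e : Fin ℓ × Fin ℓ} (he : e ∈ C.edges) :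
    e.2 = e.1 + 1 ∨ e.1 = e.2 + 1 := by
  simp only [Fin.ext_iff, Fin.val_add_one_eq_mod]
  exact hC.1 e he

lemma mem_or_mem (hC : IsCycleOrientation C) (i : Fin ℓ) :
    (i, i + 1) ∈ C.edges ∨ (i + 1, i) ∈ C.edges := by
  obtain ⟨⟨a, b⟩, he, ⟨rfl, h⟩ | ⟨rfl, h⟩⟩ := hC.2 i
  · left
    rwa [show a + 1 = b from Fin.ext (by rw [Fin.val_add_one_eq_mod, h])]
  · right
    rwa [show b + 1 = a from Fin.ext (by rw [Fin.val_add_one_eq_mod, h])]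

lemma mem_or_swap_mem (hC : IsCycleOrientation C) (hC' : IsCycleOrientation C')
    {e : Fin ℓ × Fin ℓ} (he : e ∈ C'.edges) : e ∈ C.edges ∨ e.swap ∈ C.edges := by
  obtain ⟨a, b⟩ := e
  rcases hC'.adj_of_mem he with h | h <;> dsimp only at h <;> subst h
  exacts [hC.mem_or_mem a, (hC.mem_or_mem b).symm]

lemma obtainedBy (hC : IsCycleOrientation C) (hC' : IsCycleOrientation C') {r : ℕ → Prop}
    (hr : r (C.edges \ C'.edges).card) : ObtainedBy C C'.edges r :=
  obtainedBy_of_forall_mem_or_swap_mem (fun _ => hC.mem_or_swap_mem hC')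
    (fun _ => hC'.mem_or_swap_mem hC) hr

end IsCycleOrientation

def cycleEdge (C : OrientedGraph (Fin ℓ)) (i : Fin ℓ) : Fin ℓ × Fin ℓ :=
  if (i, i + 1) ∈ C.edges then (i, i + 1) else (i + 1, i)

lemma cycleEdge_injective (hℓ : 3 ≤ ℓ) (C : OrientedGraph (Fin ℓ)) :
    Function.Injective (cycleEdge C) := by
  intro i j h
  unfold cycleEdge at h
  split_ifs at h <;> simp only [Prod.mk.injEq] at h
  · exact h.1
  · exact absurd (by rw [← h.1, h.2]) (Fin.add_one_add_one_ne_self hℓ j)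
  · exact absurd (by rw [h.1, h.2]) (Fin.add_one_add_one_ne_self hℓ i)
  · exact h.2

lemma IsCycleOrientation.image_cycleEdge {C : OrientedGraph (Fin ℓ)}
    (hC : IsCycleOrientation C) : univ.image (cycleEdge C) = C.edges := by
  ext e
  simp only [mem_image, mem_univ, true_and]
  constructor
  · rintro ⟨i, rfl⟩
    unfold cycleEdge
    split_ifs with h
    exacts [h, (hC.mem_or_mem i).resolve_left h]
  · intro he
    rcases hC.adj_of_mem he with h | h
    · exact ⟨e.1, by rw [cycleEdge, ← h, if_pos he]⟩
    · have hswap : (e.2, e.2 + 1) ∉ C.edges := by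
        rw [← h]
        exact C.antisymm _ _ he
      exact ⟨e.2, by rw [cycleEdge, if_neg hswap, ← h]⟩

lemma IsCycleOrientation.card_edges {C : OrientedGraph (Fin ℓ)} (hC : IsCycleOrientation C)
    (hℓ : 3 ≤ ℓ) : C.edges.card = ℓ := by
  rw [← hC.image_cycleEdge, card_image_of_injective _ (cycleEdge_injective hℓ C), card_univ,
    Fintype.card_fin]

def edgeSign (C : OrientedGraph (Fin ℓ)) (i : Fin ℓ) : ℝ :=
  if (i, i + 1) ∈ C.edges then 1 else -1

def cycleSign (C : OrientedGraph (Fin ℓ)) : ℝ :=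
  ∏ i, edgeSign C i

lemma isCycleOrientation_cycD (hℓ : 2 ≤ ℓ) : IsCycleOrientation (cycD ℓ) := by
  refine ⟨fun e he => ?_, fun i => ?_⟩
  · simp only [cycD, mem_filter, mem_univ, true_and] at he
    rw [Nat.add_one_mod_eq_ite e.1.isLt, Nat.add_one_mod_eq_ite e.2.isLt]
    split_ifs <;> omega
  · have hi := i.isLt
    by_cases h : (i : ℕ) < ℓ / 2
    · refine ⟨(i, i + 1), ?_, Or.inl ⟨rfl, Fin.val_add_one_eq_mod i⟩⟩
      simp only [cycD, mem_filter, mem_univ, true_and, Fin.val_add_one_eq_mod,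
        Nat.add_one_mod_eq_ite hi]
      split_ifs <;> omega
    · refine ⟨(i + 1, i), ?_, Or.inr ⟨rfl, Fin.val_add_one_eq_mod i⟩⟩
      simp only [cycD, mem_filter, mem_univ, true_and, Fin.val_add_one_eq_mod,
        Nat.add_one_mod_eq_ite hi]
      split_ifs <;> omega

lemma mk_add_one_mem_cycD_edges_iff (hℓ : 3 ≤ ℓ) (i : Fin ℓ) :
    (i, i + 1) ∈ (cycD ℓ).edges ↔ (i : ℕ) < ℓ / 2 := by
  have hi := i.isLt
  simp only [cycD, mem_filter, mem_univ, true_and, Fin.val_add_one_eq_mod,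
    Nat.add_one_mod_eq_ite hi]
  split_ifs <;> omega

lemma cycleSign_cycD (hℓ : 3 ≤ ℓ) : cycleSign (cycD ℓ) = (-1) ^ (ℓ - ℓ / 2) := by
  simp only [cycleSign, edgeSign, mk_add_one_mem_cycD_edges_iff hℓ]
  rw [Fin.prod_univ_eq_prod_range (fun k => if k < ℓ / 2 then (1 : ℝ) else -1), prod_ite,
    prod_const_one, one_mul, prod_const, ← Nat.card_Ico]
  congr 2
  ext k
  simp only [mem_filter, mem_range, mem_Ico]
  omega

end CycleOrientation

theorem homDensity_eq_gammaCoeff_mul {ℓ : ℕ} (hℓ : 2 ≤ ℓ) {C : OrientedGraph (Fin ℓ)}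
    (hC : IsCycleOrientation C) {U : ℝ → ℝ → ℝ}
    (hU : ∀ x ∈ Set.Icc (0 : ℝ) 1, ∀ y ∈ Set.Icc (0 : ℝ) 1, U x y = -U y x) :
    homDensity C U = gammaCoeff C * homDensity (cycD ℓ) U := by
  have : NeZero ℓ := ⟨by omega⟩
  have hD := isCycleOrientation_cycD hℓ
  unfold gammaCoeff
  split_ifs with hEven
  · obtain ⟨m, hm, hCD⟩ := homDensity_eq_neg_one_pow_mul_of_obtainedBy hU hEven
    rw [hCD, hm.neg_one_pow]
    simp
  · have hOdd : ObtainedBy (cycD ℓ) C.edges Odd :=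
      hD.obtainedBy hC (Nat.not_even_iff_odd.1 fun h => hEven (hD.obtainedBy hC h))
    obtain ⟨m, hm, hCD⟩ := homDensity_eq_neg_one_pow_mul_of_obtainedBy hU hOdd
    rw [hCD, hm.neg_one_pow]
    simp

noncomputable def fourierExp (t : ℝ) : ℂ := cexp (2 * π * I * t)

lemma fourierExp_add (s t : ℝ) : fourierExp (s + t) = fourierExp s * fourierExp t := by
  simp only [fourierExp, ofReal_add, mul_add, Complex.exp_add]

lemma continuous_fourierExp : Continuous fourierExp := by
  unfold fourierExp
  fun_prop

lemma integral_fourierExp_int_mul (n : ℤ) :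
    ∫ t in Set.Icc (0 : ℝ) 1, fourierExp (n * t) = if n = 0 then 1 else 0 := by
  rw [integral_Icc_eq_integral_Ioc, ← intervalIntegral.integral_of_le zero_le_one]
  split_ifs with hn
  · simp [hn, fourierExp]
  · have hc : 2 * π * I * n ≠ 0 := by simp [hn, Real.pi_ne_zero, I_ne_zero]
    have hperiod : cexp (2 * π * I * n) = 1 := by
      rw [mul_comm]
      exact exp_int_mul_two_pi_mul_I n
    simp only [fourierExp, ofReal_mul, ofReal_intCast, ← mul_assoc]
    rw [integral_exp_mul_complex hc]
    simp [hperiod]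

open Fin.NatCast in
lemma Fin.apply_eq_apply_zero_of_apply_sub_one {α : Type*} {ℓ : ℕ} [NeZero ℓ] {p : Fin ℓ → α}
    (h : ∀ j, p (j - 1) = p j) (j : Fin ℓ) : p j = p 0 := by
  suffices ∀ k : ℕ, p (k : Fin ℓ) = p 0 by simpa using this j
  intro k
  induction k with
  | zero => simp
  | succ k ih => rw [Nat.cast_succ, ← h, add_sub_cancel_right, ih]

lemma Fin.prod_apply_add_one {M : Type*} [CommMonoid M] {ℓ : ℕ} [NeZero ℓ]
    (f : Fin ℓ → Fin ℓ → M) : ∏ i, f i (i + 1) = ∏ j, f (j - 1) j :=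
  Fintype.prod_equiv (Equiv.addRight 1) _ _ (by simp)

lemma prod_fourierExp_cycle {ℓ : ℕ} [NeZero ℓ] (p : Fin ℓ → ℤ) (x : Fin ℓ → ℝ) :
    ∏ i, fourierExp (p i * (x (i + 1) - x i)) =
      ∏ j, fourierExp ((p (j - 1) - p j : ℤ) * x j) := by
  have h : ∀ i, fourierExp (p i * (x (i + 1) - x i)) =
      fourierExp (p i * x (i + 1)) * fourierExp (-p i * x i) := fun i => by
    rw [← fourierExp_add]
    ring_nf
  simp_rw [h, prod_mul_distrib, Fin.prod_apply_add_one (fun i j => fourierExp (p i * x j)),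
    ← prod_mul_distrib, ← fourierExp_add]
  congr 1 with j
  push_cast
  ring_nf

theorem integral_prod_cycle_trigPoly {ℓ : ℕ} [NeZero ℓ] (S : Finset ℤ) (c : Fin ℓ → ℤ → ℂ) :
    ∫ x in Set.univ.pi (fun _ : Fin ℓ => Set.Icc (0 : ℝ) 1),
      ∏ i, ∑ m ∈ S, c i m * fourierExp (m * (x (i + 1) - x i)) = ∑ m ∈ S, ∏ i, c i m := by
  set μ : Measure (Fin ℓ → ℝ) := Measure.pi fun _ => volume.restrict (Set.Icc (0 : ℝ) 1)
  have hexpand : ∀ x : Fin ℓ → ℝ, ∏ i, ∑ m ∈ S, c i m * fourierExp (m * (x (i + 1) - x i)) =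
      ∑ p ∈ Fintype.piFinset fun _ => S,
        (∏ i, c i (p i)) * ∏ j, fourierExp ((p (j - 1) - p j : ℤ) * x j) := fun x => by
    rw [prod_univ_sum]
    simp_rw [prod_mul_distrib, prod_fourierExp_cycle]
  have hint : ∀ p : Fin ℓ → ℤ,
      Integrable (fun x : Fin ℓ → ℝ => ∏ j, fourierExp ((p (j - 1) - p j : ℤ) * x j)) μ :=
    fun p => Integrable.fintype_prod fun j =>
      (continuous_fourierExp.comp (continuous_const.mul continuous_id)).integrableOn_Icc
  have hcoord : ∀ p : Fin ℓ → ℤ, ∫ x, ∏ j, fourierExp ((p (j - 1) - p j : ℤ) * x j) ∂μ =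
      if ∀ j, p (j - 1) = p j then 1 else 0 := fun p => by
    rw [integral_fintype_prod_eq_prod (E := fun _ => ℝ)
      (fun j t => fourierExp ((p (j - 1) - p j : ℤ) * t))]
    simp_rw [integral_fourierExp_int_mul, sub_eq_zero, prod_boole, mem_univ, true_implies]
  have hconst : {p ∈ Fintype.piFinset (fun _ : Fin ℓ => S) | ∀ j, p (j - 1) = p j} =
      S.map ⟨Function.const (Fin ℓ), Function.const_injective⟩ := by
    ext p
    simp only [mem_filter, Fintype.mem_piFinset, mem_map, Function.Embedding.coeFn_mk]
    constructor
    · rintro ⟨hS, hp⟩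
      exact ⟨p 0, hS 0, funext fun j => (Fin.apply_eq_apply_zero_of_apply_sub_one hp j).symm⟩
    · rintro ⟨m, hm, rfl⟩
      simp [hm]
  simp_rw [hexpand, volume_pi, Measure.restrict_pi_pi]
  rw [integral_finsetSum _ fun p _ => (hint p).const_mul _]
  simp_rw [integral_const_mul, hcoord, mul_boole, ← sum_filter, hconst, sum_map]
  rfl

/-- The Fourier coefficients of `t ↦ a + b sin 2πt`; only `m ∈ {-1, 0, 1}` are ever used. -/
noncomputable def sineCoeff (a b : ℝ) (m : ℤ) : ℂ := if m = 0 then a else m * b / (2 * I)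

lemma ofReal_add_mul_sin_eq_sum (a b t : ℝ) :
    ((a + b * Real.sin (2 * π * t) : ℝ) : ℂ) =
      ∑ m ∈ ({-1, 0, 1} : Finset ℤ), sineCoeff a b m * fourierExp (m * t) := by
  have e₁ : cexp (↑(2 * π * t) * I) = fourierExp t := by
    rw [fourierExp]
    push_cast
    ring_nf
  have e₂ : cexp (-↑(2 * π * t) * I) = fourierExp (-t) := by
    rw [fourierExp]
    push_cast
    ring_nf
  have hsin : ((Real.sin (2 * π * t) : ℝ) : ℂ) =
      (fourierExp t - fourierExp (-t)) / (2 * I) := by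
    rw [ofReal_sin, Complex.sin, e₁, e₂]
    field_simp
    linear_combination (fourierExp (-t) - fourierExp t) * I_sq
  have h0 : fourierExp 0 = 1 := by simp [fourierExp]
  simp [sineCoeff, hsin, h0]
  ring

noncomputable def sineKernel (a b x y : ℝ) : ℝ := a + b * Real.sin (2 * π * (y - x))

lemma sineKernel_add_sineKernel (a b x y : ℝ) :
    sineKernel a b x y + sineKernel a b y x = 2 * a := by
  unfold sineKernel
  rw [show 2 * π * (x - y) = -(2 * π * (y - x)) by ring, Real.sin_neg]
  ring

lemma isTournamenton_sineKernel {b : ℝ} (hb : |b| ≤ 1 / 2) :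
    IsTournamenton (sineKernel (1 / 2) b) := by
  refine ⟨?_, fun x _ y _ => ?_, fun x _ y _ => by rw [sineKernel_add_sineKernel]; norm_num⟩
  · apply Continuous.measurable
    unfold sineKernel Function.uncurry
    fun_prop
  · have h : |b * Real.sin (2 * π * (y - x))| ≤ 1 / 2 := by
      rw [abs_mul]
      exact (mul_le_of_le_one_right (abs_nonneg b) (abs_sin_le_one _)).trans hb
    rw [abs_le] at h
    constructor <;> unfold sineKernel <;> linarith

lemma sineKernel_cycleEdge {ℓ : ℕ} [NeZero ℓ] (C : OrientedGraph (Fin ℓ)) (a b : ℝ)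
    (x : Fin ℓ → ℝ) (i : Fin ℓ) :
    sineKernel a b (x (cycleEdge C i).1) (x (cycleEdge C i).2) =
      a + edgeSign C i * b * Real.sin (2 * π * (x (i + 1) - x i)) := by
  unfold cycleEdge edgeSign
  split_ifs
  · simp [sineKernel]
  · rw [eq_sub_of_add_eq' (sineKernel_add_sineKernel a b _ _), sineKernel]
    ring

theorem homDensity_sineKernel {ℓ : ℕ} [NeZero ℓ] (hℓ : 3 ≤ ℓ) (hEv : Even ℓ)
    {C : OrientedGraph (Fin ℓ)} (hC : IsCycleOrientation C) (a b : ℝ) :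
    homDensity C (sineKernel a b) = a ^ ℓ + 2 * (-1) ^ (ℓ / 2) * cycleSign C * (b / 2) ^ ℓ := by
  apply Complex.ofReal_injective
  have hexpand : ∀ x : Fin ℓ → ℝ, ((∏ e ∈ C.edges, sineKernel a b (x e.1) (x e.2) : ℝ) : ℂ) =
      ∏ i, ∑ m ∈ ({-1, 0, 1} : Finset ℤ),
        sineCoeff a (edgeSign C i * b) m * fourierExp (m * (x (i + 1) - x i)) := fun x => by
    rw [← hC.image_cycleEdge, prod_image (cycleEdge_injective hℓ C).injOn, ofReal_prod]
    simp_rw [sineKernel_cycleEdge, ofReal_add_mul_sin_eq_sum]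
  rw [homDensity, ← integral_complex_ofReal]
  simp_rw [hexpand]
  rw [integral_prod_cycle_trigPoly]
  have hcoeff : ∀ m : ℤ, m ≠ 0 →
      ∏ i, sineCoeff a (edgeSign C i * b) m = cycleSign C * (m * b / (2 * I)) ^ ℓ := by
    intro m hm
    rw [cycleSign, ofReal_prod, ← Fin.prod_const ℓ ((m : ℂ) * b / (2 * I)), ← prod_mul_distrib]
    refine prod_congr rfl fun i _ => ?_
    rw [sineCoeff, if_neg hm]
    push_cast
    ring
  have hzero : ∏ i : Fin ℓ, sineCoeff a (edgeSign C i * b) 0 = (a : ℂ) ^ ℓ := by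
    simp [sineCoeff]
  have hpow : ((b : ℂ) / (2 * I)) ^ ℓ = (-1) ^ (ℓ / 2) * (b / 2) ^ ℓ := by
    obtain ⟨k, rfl⟩ := hEv
    rw [show (k + k) / 2 = k by omega, ← two_mul, pow_mul, pow_mul, div_pow, mul_pow, I_sq,
      ← mul_pow]
    ring
  rw [sum_insert (by decide), sum_insert (by decide), sum_singleton, hcoeff (-1) (by decide),
    hcoeff 1 (by decide), hzero]
  simp only [Int.cast_neg, Int.cast_one, neg_one_mul, one_mul, neg_div, hEv.neg_pow, hpow]
  push_cast
  ring

theorem homDensity_sineKernel_eq_add {ℓ : ℕ} (hℓ : 3 ≤ ℓ) (hEv : Even ℓ)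
    {C : OrientedGraph (Fin ℓ)} (hC : IsCycleOrientation C) (a b : ℝ) :
    homDensity C (sineKernel a b) = a ^ ℓ + homDensity C (sineKernel 0 b) := by
  have : NeZero ℓ := ⟨by omega⟩
  rw [homDensity_sineKernel hℓ hEv hC, homDensity_sineKernel hℓ hEv hC, zero_pow (by omega),
    zero_add]

theorem homDensity_cycD_sineKernel_pos {ℓ : ℕ} (hℓ : 3 ≤ ℓ) (hEv : Even ℓ) {b : ℝ}
    (hb : b ≠ 0) : 0 < homDensity (cycD ℓ) (sineKernel 0 b) := by
  have : NeZero ℓ := ⟨by omega⟩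
  rw [homDensity_sineKernel hℓ hEv (isCycleOrientation_cycD (by omega)), cycleSign_cycD hℓ,
    zero_pow (by omega), zero_add, mul_assoc 2, ← pow_add,
    show ℓ / 2 + (ℓ - ℓ / 2) = ℓ by omega, hEv.neg_one_pow, mul_one]
  exact mul_pos two_pos (hEv.pow_pos (div_ne_zero hb two_ne_zero))

/-- for an orientation `C` of an even cycle, if `γ_C = 1` there is a
tournamenton with density of `C` above `2^{-‖C‖}`, and if `γ_C = -1` there is one with
density below `2^{-‖C‖}`. -/
theorem exists_tournamenton_of_gamma (ℓ : ℕ) (hℓ : 4 ≤ ℓ) (hEv : Even ℓ)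
    (C : OrientedGraph (Fin ℓ)) (hC : IsCycleOrientation C) :
    (gammaCoeff C = 1 →
      ∃ W : ℝ → ℝ → ℝ, IsTournamenton W ∧
        (1 / 2 : ℝ) ^ C.edges.card < homDensity C W) ∧
    (gammaCoeff C = -1 →
      ∃ W : ℝ → ℝ → ℝ, IsTournamenton W ∧
        homDensity C W < (1 / 2 : ℝ) ^ C.edges.card) := by
  have : NeZero ℓ := ⟨by omega⟩
  have hW := isTournamenton_sineKernel (b := 1 / 2) (by norm_num [abs_of_pos])
  have hCW : homDensity C (sineKernel (1 / 2) (1 / 2)) = (1 / 2) ^ C.edges.card +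
      gammaCoeff C * homDensity (cycD ℓ) (sineKernel 0 (1 / 2)) := by
    rw [homDensity_sineKernel_eq_add (by omega) hEv hC, hC.card_edges (by omega),
      homDensity_eq_gammaCoeff_mul (by omega) hC fun x _ y _ =>
        eq_neg_of_add_eq_zero_left (by rw [sineKernel_add_sineKernel, mul_zero])]
  have hDpos := homDensity_cycD_sineKernel_pos (by omega) hEv (b := 1 / 2) (by norm_num)
  refine ⟨fun hγ => ⟨_, hW, ?_⟩, fun hγ => ⟨_, hW, ?_⟩⟩ <;> rw [hCW, hγ] <;> push_cast <;>
    linarith
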